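/- arXiv:1807.06720 — 2 statements merged into one kernel-verified Lean document; each statement's English description precedes it below -/
import Mathlib

section
/- Let V be a normal supervisor on the plant G and A an attacker. Then the conjunction of (1) L(V_A/G) ∩ L_dmg ≠ ∅ and (2) L(V_A/G) \ P_o^{-1}(P_o(L(V/G))) ⊆ L_dmg·Σ* holds if and only if ∅ ≠ L(V_A/G) \ L(V/G) ⊆ L_dmg. -/
/-!
Normality makes every attacker-enabled event observable, so a string of `L(V_A/G)` whose
observation still lies in `P_o(L(V/G))` is already in `L(V/G)`. Hence `L(V_A/G) \ L(V/G)` is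
exactly the part of `L(V_A/G)` escaping `P_o⁻¹(P_o(L(V/G)))`, and all proper prefixes of an
attacked string lie in `L(V/G)`, which misses `L_dmg`: a damaging prefix of an escaping string
must be the whole string.
-/

open scoped Classical

namespace ActuatorAttack

variable {A : Type*}

/-- Natural projection onto a sub-alphabet `S`: erase the letters not in `S`. -/
noncomputable def proj (S : Set A) (l : List A) : List A :=
  l.filter (fun a => decide (a ∈ S))

/-- The least language containing `ε` and closed under appending an event `σ`
allowed by `allow` at `s`, provided the result lies in the plant language `LG`. -/
inductive Lang (LG : Set (List A)) (allow : List A → Set A) : List A → Prop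
  | nil : Lang LG allow []
  | snoc {s : List A} {σ : A} : Lang LG allow s → σ ∈ allow s →
      (s ++ [σ]) ∈ LG → Lang LG allow (s ++ [σ])

/-- The closed-loop language `L(V/G)`. -/
def LVG (LG : Set (List A)) (So : Set A) (V : List A → Set A) :
    Set (List A) :=
  {s | Lang LG (fun t => V (proj So t)) s}

/-- Auxiliary function for the attacker-observation map: `pre` is the prefix
of the supervisor observation sequence already processed. -/
noncomputable def phatAux (V : List A → Set A) (SoA : Set A) :
    List A → List A → List (List A × Set A)
  | _, [] => []
  | pre, σ :: rest =>
      (proj SoA [σ], V (pre ++ [σ])) :: phatAux V SoA (pre ++ [σ]) rest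

/-- The attacker-observation map `P̂`: the i-th letter of `P̂(σ₁⋯σₙ)` is
`(P_{o,A}(σᵢ), V(σ₁⋯σᵢ))`. -/
noncomputable def phat (V : List A → Set A) (SoA : Set A) (w : List A) :
    List (List A × Set A) :=
  phatAux V SoA [] w

/-- The attacked supervisor `V_A`. -/
noncomputable def VA (V : List A → Set A) (ScA SoA : Set A)
    (Att : List (List A × Set A) → Set A) (w : List A) : Set A :=
  (V w \ ScA) ∪ Att (phat V SoA w)

/-- The attacked closed-loop language `L(V_A/G)`. -/
def LVAG (LG : Set (List A)) (So : Set A) (V : List A → Set A)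
    (ScA SoA : Set A) (Att : List (List A × Set A) → Set A) : Set (List A) :=
  {s | Lang LG (fun t =>
      {σ | proj So t ∈ proj So '' LVG LG So V ∧
           σ ∈ VA V ScA SoA Att (proj So t)}) s}

/-- An attacker is enabling if it enables every attackable event enabled by
the supervisor. -/
def Enabling (LG : Set (List A)) (So : Set A) (V : List A → Set A)
    (ScA SoA : Set A) (Att : List (List A × Set A) → Set A) : Prop :=
  ∀ w ∈ proj So '' LVG LG So V, V w ∩ ScA ⊆ Att (phat V SoA w)

/-- An attacker is successful if the attacked closed-loop language meets the
damage set, and everything outside `P_o⁻¹(P_o(L(V/G)))` lies in `L_dmg·Σ*`. -/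
def Successful (LG : Set (List A)) (So : Set A) (V : List A → Set A)
    (ScA SoA : Set A) (Att : List (List A × Set A) → Set A)
    (Ldmg : Set (List A)) : Prop :=
  (LVAG LG So V ScA SoA Att ∩ Ldmg).Nonempty ∧
  LVAG LG So V ScA SoA Att \ (proj So ⁻¹' (proj So '' LVG LG So V)) ⊆
    {t | ∃ d ∈ Ldmg, d <+: t}

/-- `(s, σ)` is an attack pair. -/
def AttackPair (LG : Set (List A)) (So : Set A) (V : List A → Set A)
    (ScA SoA : Set A) (Ldmg : Set (List A)) (s : List A) (σ : A) : Prop :=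
  s ∈ LVG LG So V ∧ σ ∈ ScA ∧ s ++ [σ] ∈ Ldmg ∧
  ∀ s' ∈ LVG LG So V,
    phat V SoA (proj So s) = phat V SoA (proj So s') →
    s' ++ [σ] ∈ LG → s' ++ [σ] ∈ Ldmg

/-- `En(s, σ)`: one-step `σ`-extensions in `L(G)` of strings of `L(V/G)` that
are attacker-observation equivalent to `s`. -/
def En (LG : Set (List A)) (So : Set A) (V : List A → Set A)
    (SoA : Set A) (s : List A) (σ : A) : Set (List A) :=
  {t | ∃ s' ∈ LVG LG So V, t = s' ++ [σ] ∧ t ∈ LG ∧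
       phat V SoA (proj So s) = phat V SoA (proj So s')}

/-- `I(ŵ)`: attackable events `σ` such that some string `s'` of `L(V/G)` with
attacker observation `ŵ` forms an attack pair `(s', σ)`. -/
def ISet (LG : Set (List A)) (So : Set A) (V : List A → Set A)
    (ScA SoA : Set A) (Ldmg : Set (List A))
    (w : List (List A × Set A)) : Set A :=
  {σ | σ ∈ ScA ∧ ∃ s' ∈ LVG LG So V,
        phat V SoA (proj So s') = w ∧ AttackPair LG So V ScA SoA Ldmg s' σ}

/-- The supremal attacker `A^sup`. -/
def Asup (LG : Set (List A)) (So : Set A) (V : List A → Set A)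
    (ScA SoA : Set A) (Ldmg : Set (List A))
    (w : List (List A × Set A)) : Set A :=
  {σ | ∃ s ∈ LVG LG So V, phat V SoA (proj So s) = w ∧
        σ ∈ V (proj So s) ∩ ScA} ∪
  ISet LG So V ScA SoA Ldmg w

lemma proj_append_singleton_of_mem {S : Set A} {σ : A} (h : σ ∈ S) (t : List A) :
    proj S (t ++ [σ]) = proj S t ++ [σ] := by
  simp [proj, h]

lemma proj_append_singleton_of_notMem {S : Set A} {σ : A} (h : σ ∉ S) (t : List A) :
    proj S (t ++ [σ]) = proj S t := by
  simp [proj, h]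

theorem Lang.of_isPrefix {LG : Set (List A)} {allow : List A → Set A} {s d : List A}
    (hs : Lang LG allow s) (hd : d <+: s) : Lang LG allow d := by
  induction hs with
  | nil => rw [List.prefix_nil.mp hd]; exact .nil
  | snoc ht hσ hLG ih =>
    rcases List.prefix_concat_iff.mp hd with rfl | hd
    · exact .snoc ht hσ hLG
    · exact ih hd

section ClosedLoop

variable {LG : Set (List A)} {So : Set A} {V : List A → Set A}

theorem mem_V_of_proj_eq_append {s w : List A} {σ : A} (hs : s ∈ LVG LG So V)
    (h : proj So s = w ++ [σ]) : σ ∈ V w := by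
  induction hs with
  | nil => simp [proj] at h
  | @snoc t τ _ hτ _ ih =>
    by_cases hτSo : τ ∈ So
    · rw [proj_append_singleton_of_mem hτSo] at h
      obtain ⟨rfl, rfl⟩ := List.append_inj' h rfl |>.imp id List.singleton_inj.mp
      exact hτ
    · exact ih (by rwa [proj_append_singleton_of_notMem hτSo] at h)

variable {ScA SoA : Set A} {Att : List (List A × Set A) → Set A}

theorem mem_LVG_of_mem_LVAG (hAtt : ∀ x, Att x ⊆ So) {s : List A}
    (hs : s ∈ LVAG LG So V ScA SoA Att) (hproj : proj So s ∈ proj So '' LVG LG So V) :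
    s ∈ LVG LG So V := by
  induction hs with
  | nil => exact .nil
  | @snoc t τ _ hτ hLG ih =>
    obtain ⟨htproj, hτV | hτAtt⟩ := hτ
    · exact .snoc (ih htproj) hτV.1 hLG
    · have hτSo : τ ∈ So := hAtt _ hτAtt
      obtain ⟨s', hs', hs'proj⟩ := hproj
      rw [proj_append_singleton_of_mem hτSo] at hs'proj
      exact .snoc (ih htproj) (mem_V_of_proj_eq_append hs' hs'proj) hLG

theorem mem_LVG_of_isPrefix_of_ne (hAtt : ∀ x, Att x ⊆ So) {s d : List A}
    (hs : s ∈ LVAG LG So V ScA SoA Att) (hd : d <+: s) (hne : d ≠ s) :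
    d ∈ LVG LG So V := by
  cases hs with
  | nil => exact absurd (List.prefix_nil.mp hd) hne
  | snoc ht hτ _ =>
    have hdt := (List.prefix_concat_iff.mp hd).resolve_left hne
    exact Lang.of_isPrefix (mem_LVG_of_mem_LVAG hAtt ht hτ.1) hdt

end ClosedLoop

theorem stmt_2_general {A : Type*} (So Sc : Set A) (LG : Set (List A))
    (V : List A → Set A)
    (hnormV : Sc ⊆ So)
    (ScA SoA : Set A) (hcA : ScA ⊆ Sc)
    (Att : List (List A × Set A) → Set A) (hAtt : ∀ x, Att x ⊆ ScA)
    (Ldmg : Set (List A))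
    (hLdV : Ldmg ∩ LVG LG So V = ∅) :
    ((LVAG LG So V ScA SoA Att ∩ Ldmg).Nonempty ∧
      LVAG LG So V ScA SoA Att \ (proj So ⁻¹' (proj So '' LVG LG So V)) ⊆
        {t | ∃ d ∈ Ldmg, d <+: t}) ↔
    ((LVAG LG So V ScA SoA Att \ LVG LG So V).Nonempty ∧
      LVAG LG So V ScA SoA Att \ LVG LG So V ⊆ Ldmg) := by
  have hAttSo : ∀ x, Att x ⊆ So := fun x => (hAtt x).trans (hcA.trans hnormV)
  have hdisj : ∀ d ∈ Ldmg, d ∉ LVG LG So V := fun d hd hdV => hLdV.subset ⟨hd, hdV⟩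
  constructor
  · rintro ⟨⟨s, hsA, hsD⟩, hescape⟩
    refine ⟨⟨s, hsA, hdisj s hsD⟩, fun s ⟨hsA, hsV⟩ => ?_⟩
    have hproj : proj So s ∉ proj So '' LVG LG So V :=
      fun h => hsV (mem_LVG_of_mem_LVAG hAttSo hsA h)
    obtain ⟨d, hd, hds⟩ := hescape ⟨hsA, hproj⟩
    obtain rfl | hne := eq_or_ne d s
    · exact hd
    · exact absurd (mem_LVG_of_isPrefix_of_ne hAttSo hsA hds hne) (hdisj d hd)
  · rintro ⟨⟨s, hsA, hsV⟩, hsub⟩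
    refine ⟨⟨s, hsA, hsub ⟨hsA, hsV⟩⟩, fun s ⟨hsA, hproj⟩ => ⟨s, ?_, List.prefix_refl s⟩⟩
    exact hsub ⟨hsA, fun hsV => hproj ⟨s, hsV, rfl⟩⟩

/-- For a normal supervisor `V` and any attacker `A`,
`L(V_A/G) ∩ L_dmg ≠ ∅` and `L(V_A/G) \ P_o⁻¹(P_o(L(V/G))) ⊆ L_dmg·Σ*`
iff `∅ ≠ L(V_A/G) \ L(V/G) ⊆ L_dmg`. -/
theorem stmt_2 {A : Type*} [Fintype A] (So Sc : Set A) (LG : Set (List A))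
    (hnil : [] ∈ LG) (hpref : ∀ s t : List A, s <+: t → t ∈ LG → s ∈ LG)
    (V : List A → Set A) (hV : ∀ w, Scᶜ ⊆ V w)
    (hnormV : Sc ⊆ So)
    (ScA SoA : Set A) (hcA : ScA ⊆ Sc) (hoA : SoA ⊆ So)
    (Att : List (List A × Set A) → Set A) (hAtt : ∀ x, Att x ⊆ ScA)
    (Ldmg : Set (List A)) (hLd : Ldmg ⊆ LG)
    (hLdV : Ldmg ∩ LVG LG So V = ∅) :
    ((LVAG LG So V ScA SoA Att ∩ Ldmg).Nonempty ∧
      LVAG LG So V ScA SoA Att \ (proj So ⁻¹' (proj So '' LVG LG So V)) ⊆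
        {t | ∃ d ∈ Ldmg, d <+: t}) ↔
    ((LVAG LG So V ScA SoA Att \ LVG LG So V).Nonempty ∧
      LVAG LG So V ScA SoA Att \ LVG LG So V ⊆ Ldmg) :=
  stmt_2_general So Sc LG V hnormV ScA SoA hcA Att hAtt Ldmg hLdV

end ActuatorAttack
end

section
/- Let V be a normal supervisor on the plant G, let the attack constraint be normal (Σ_{c,A} ⊆ Σ_{o,A}), and suppose AP_dmg ≠ ∅. Then the attacker A^sup is enabling and successful; that is, A^sup(P̂(w)) ⊇ V(w) ∩ Σ_{c,A} for all w ∈ P_o(L(V/G)), and ∅ ≠ L(V_{A^sup}/G) \ L(V/G) ⊆ L_dmg. -/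
open scoped Classical

namespace ActuatorAttack

variable {A : Type*}

/-!
Under a normal supervisor, `L(V/G)` is recovered from its projection:
`L(V/G) = P_o⁻¹(P_o(L(V/G))) ∩ L(G)`. Hence every string `qσ` generated under `V_{A^sup}`
has its prefix `q` in `L(V/G)`. If `σ` is enabled because `V(P_o(q)) ∩ Σ_{c,A}` contains it
for some `s` with the same attacker observation as `q`, then `σ ∈ V(P_o(q))`, since `P̂`
records the control pattern. Otherwise `σ ∈ I(P̂(P_o(q)))`, and the attack-pair property
puts `qσ` in `L_dmg`. So `L(V_{A^sup}/G) ⊆ L(V/G) ∪ L_dmg`. Conversely, any attack pair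
`(s, σ)` gives the string `sσ ∈ L(V_{A^sup}/G) ∩ L_dmg`, which is outside `L(V/G)`.
-/

lemma proj_append (S : Set A) (l m : List A) :
    proj S (l ++ m) = proj S l ++ proj S m := by
  simp [proj]

lemma proj_singleton_of_mem {S : Set A} {σ : A} (h : σ ∈ S) : proj S [σ] = [σ] := by
  simp [proj, h]

lemma proj_singleton_of_notMem {S : Set A} {σ : A} (h : σ ∉ S) : proj S [σ] = [] := by
  simp [proj, h]

lemma V_append_eq_of_phatAux_eq (V : List A → Set A) (SoA : Set A) {u u' pre pre' : List A}
    (h : phatAux V SoA pre u = phatAux V SoA pre' u') (hpre : V pre = V pre') :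
    V (pre ++ u) = V (pre' ++ u') := by
  induction u generalizing u' pre pre' with
  | nil =>
    cases u' with
    | nil => simpa using hpre
    | cons => simp [phatAux] at h
  | cons σ rest ih =>
    cases u' with
    | nil => simp [phatAux] at h
    | cons σ' rest' =>
      simp only [phatAux, List.cons.injEq, Prod.mk.injEq] at h
      simpa using ih h.2 h.1.2

lemma V_eq_of_phat_eq (V : List A → Set A) (SoA : Set A) {u u' : List A}
    (h : phat V SoA u = phat V SoA u') : V u = V u' := by
  simpa using V_append_eq_of_phatAux_eq V SoA h rfl

section ClosedLoop

variable {LG : Set (List A)} {So : Set A} {V : List A → Set A}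

lemma proj_mem_image_and_mem_V_of_proj_eq_append {s u : List A} {σ : A}
    (hs : s ∈ LVG LG So V) (hσ : σ ∈ So) (h : proj So s = u ++ [σ]) :
    u ∈ proj So '' LVG LG So V ∧ σ ∈ V u := by
  induction hs with
  | nil => simp [proj] at h
  | @snoc q τ hq hτV _ ih =>
    by_cases hτ : τ ∈ So
    · rw [proj_append, proj_singleton_of_mem hτ] at h
      obtain ⟨rfl, hτσ⟩ := List.append_inj' h rfl
      obtain rfl : τ = σ := by simpa using hτσ
      exact ⟨⟨q, hq, rfl⟩, hτV⟩
    · rw [proj_append, proj_singleton_of_notMem hτ, List.append_nil] at h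
      exact ih h

lemma mem_LVG_of_proj_mem {Sc : Set A}
    (hpref : ∀ s t : List A, s <+: t → t ∈ LG → s ∈ LG)
    (hV : ∀ w, Scᶜ ⊆ V w) (hnormV : Sc ⊆ So) {s : List A}
    (hs : s ∈ LG) (hproj : proj So s ∈ proj So '' LVG LG So V) : s ∈ LVG LG So V := by
  induction s using List.reverseRecOn with
  | nil => exact Lang.nil
  | append_singleton t σ ih =>
    have ht : t ∈ LG := hpref t _ ⟨[σ], rfl⟩ hs
    by_cases hσ : σ ∈ So
    · rw [proj_append, proj_singleton_of_mem hσ] at hproj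
      obtain ⟨s', hs', heq⟩ := hproj
      obtain ⟨htproj, hσV⟩ := proj_mem_image_and_mem_V_of_proj_eq_append hs' hσ heq
      exact Lang.snoc (ih ht htproj) hσV hs
    · rw [proj_append, proj_singleton_of_notMem hσ, List.append_nil] at hproj
      exact Lang.snoc (ih ht hproj) (hV _ fun hσc => hσ (hnormV hσc)) hs

lemma LVG_subset_LVAG {ScA SoA : Set A} {Att : List (List A × Set A) → Set A}
    (hAtt : Enabling LG So V ScA SoA Att) : LVG LG So V ⊆ LVAG LG So V ScA SoA Att := by
  intro s hs
  induction hs with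
  | nil => exact Lang.nil
  | @snoc q σ hq hσV hqσ ih =>
    refine Lang.snoc ih ⟨⟨q, hq, rfl⟩, ?_⟩ hqσ
    by_cases hσ : σ ∈ ScA
    · exact Or.inr (hAtt _ ⟨q, hq, rfl⟩ ⟨hσV, hσ⟩)
    · exact Or.inl ⟨hσV, hσ⟩

variable {ScA SoA : Set A} {Ldmg : Set (List A)}

lemma enabling_Asup : Enabling LG So V ScA SoA (Asup LG So V ScA SoA Ldmg) := by
  rintro _ ⟨t, ht, rfl⟩ σ hσ
  exact Or.inl ⟨t, ht, rfl, hσ⟩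

lemma append_mem_LVAG_Asup_of_attackPair (hLd : Ldmg ⊆ LG) {s : List A} {σ : A}
    (hap : AttackPair LG So V ScA SoA Ldmg s σ) :
    s ++ [σ] ∈ LVAG LG So V ScA SoA (Asup LG So V ScA SoA Ldmg) :=
  Lang.snoc (LVG_subset_LVAG enabling_Asup hap.1)
    ⟨⟨s, hap.1, rfl⟩, Or.inr (Or.inr ⟨hap.2.1, s, hap.1, rfl, hap⟩)⟩ (hLd hap.2.2.1)

lemma append_mem_LVG_or_Ldmg_of_mem_Asup {q : List A} {σ : A} (hq : q ∈ LVG LG So V)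
    (hqσ : q ++ [σ] ∈ LG)
    (hσ : σ ∈ VA V ScA SoA (Asup LG So V ScA SoA Ldmg) (proj So q)) :
    q ++ [σ] ∈ LVG LG So V ∨ q ++ [σ] ∈ Ldmg := by
  rcases hσ with ⟨hσV, -⟩ | ⟨s, -, hobs, hσV, -⟩ | ⟨-, s, -, hobs, hap⟩
  · exact Or.inl (Lang.snoc hq hσV hqσ)
  · exact Or.inl (Lang.snoc hq (V_eq_of_phat_eq V SoA hobs ▸ hσV) hqσ)
  · exact Or.inr (hap.2.2.2 q hq hobs hqσ)

lemma LVAG_Asup_subset {Sc : Set A}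
    (hpref : ∀ s t : List A, s <+: t → t ∈ LG → s ∈ LG)
    (hV : ∀ w, Scᶜ ⊆ V w) (hnormV : Sc ⊆ So) :
    LVAG LG So V ScA SoA (Asup LG So V ScA SoA Ldmg) ⊆ LVG LG So V ∪ Ldmg := by
  intro s hs
  induction hs with
  | nil => exact Or.inl Lang.nil
  | @snoc q σ _ hallowed hqσ _ =>
    obtain ⟨hqproj, hσ⟩ := hallowed
    have hq : q ∈ LVG LG So V :=
      mem_LVG_of_proj_mem hpref hV hnormV (hpref q _ ⟨[σ], rfl⟩ hqσ) hqproj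
    exact append_mem_LVG_or_Ldmg_of_mem_Asup hq hqσ hσ

end ClosedLoop

theorem stmt_15_general {A : Type*} (So Sc : Set A) (LG : Set (List A))
    (hpref : ∀ s t : List A, s <+: t → t ∈ LG → s ∈ LG)
    (V : List A → Set A) (hV : ∀ w, Scᶜ ⊆ V w)
    (hnormV : Sc ⊆ So)
    (ScA SoA : Set A)
    (Ldmg : Set (List A)) (hLd : Ldmg ⊆ LG)
    (hLdV : Ldmg ∩ LVG LG So V = ∅)
    (hAP : ∃ s σ, AttackPair LG So V ScA SoA Ldmg s σ) :
    Enabling LG So V ScA SoA (Asup LG So V ScA SoA Ldmg) ∧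
    Successful LG So V ScA SoA (Asup LG So V ScA SoA Ldmg) Ldmg ∧
    (LVAG LG So V ScA SoA (Asup LG So V ScA SoA Ldmg) \
        LVG LG So V).Nonempty ∧
    LVAG LG So V ScA SoA (Asup LG So V ScA SoA Ldmg) \ LVG LG So V ⊆
      Ldmg := by
  obtain ⟨s, σ, hap⟩ := hAP
  have hdmg : s ++ [σ] ∈ Ldmg := hap.2.2.1
  have hattacked := append_mem_LVAG_Asup_of_attackPair hLd hap
  have hnotLVG : s ++ [σ] ∉ LVG LG So V := fun h =>
    Set.eq_empty_iff_forall_notMem.1 hLdV _ ⟨hdmg, h⟩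
  have hdiff : LVAG LG So V ScA SoA (Asup LG So V ScA SoA Ldmg) \ LVG LG So V ⊆ Ldmg :=
    fun t ht => (LVAG_Asup_subset hpref hV hnormV ht.1).resolve_left ht.2
  refine ⟨enabling_Asup, ⟨⟨_, hattacked, hdmg⟩, ?_⟩, ⟨_, hattacked, hnotLVG⟩, hdiff⟩
  rintro t ⟨ht, htproj⟩
  exact ⟨t, hdiff ⟨ht, fun h => htproj ⟨t, h, rfl⟩⟩, List.prefix_refl t⟩

/-- If `AP_dmg ≠ ∅`, then `A^sup` is enabling and successful,
with `∅ ≠ L(V_{A^sup}/G) \ L(V/G) ⊆ L_dmg`. -/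
theorem stmt_15 {A : Type*} [Fintype A] (So Sc : Set A) (LG : Set (List A))
    (hnil : [] ∈ LG) (hpref : ∀ s t : List A, s <+: t → t ∈ LG → s ∈ LG)
    (V : List A → Set A) (hV : ∀ w, Scᶜ ⊆ V w)
    (hnormV : Sc ⊆ So)
    (ScA SoA : Set A) (hcA : ScA ⊆ Sc) (hoA : SoA ⊆ So)
    (hnormA : ScA ⊆ SoA)
    (Ldmg : Set (List A)) (hLd : Ldmg ⊆ LG)
    (hLdV : Ldmg ∩ LVG LG So V = ∅)
    (hAP : ∃ s σ, AttackPair LG So V ScA SoA Ldmg s σ) :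
    Enabling LG So V ScA SoA (Asup LG So V ScA SoA Ldmg) ∧
    Successful LG So V ScA SoA (Asup LG So V ScA SoA Ldmg) Ldmg ∧
    (LVAG LG So V ScA SoA (Asup LG So V ScA SoA Ldmg) \
        LVG LG So V).Nonempty ∧
    LVAG LG So V ScA SoA (Asup LG So V ScA SoA Ldmg) \ LVG LG So V ⊆
      Ldmg :=
  stmt_15_general So Sc LG hpref V hV hnormV ScA SoA Ldmg hLd hLdV hAP

end ActuatorAttack
end
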